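/- Let G be a Hausdorff topological gyrogroup and H a locally compact metrizable strongly L-subgyrogroup of G. If the quotient space G/H has countable tightness, then G has countable tightness, where a space X has countable tightness if for every point x ∈ X and every set P ⊆ X with x ∈ cl(P) there exists a countable subset Q of P with x ∈ cl(Q). -/

import Mathlib

universe u

/-- A gyrogroup: a groupoid with identity, inverses, gyroautomorphisms satisfying the
left gyroassociative law and the left loop property. -/
class Gyrogroup (G : Type u) where
  add : G → G → G
  zero : G
  neg : G → G
  gyr : G → G → G → G
  zero_add : ∀ x, add zero x = x
  add_zero : ∀ x, add x zero = x
  neg_add : ∀ x, add (neg x) x = zero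
  add_neg : ∀ x, add x (neg x) = zero
  gyr_bijective : ∀ a b, Function.Bijective (gyr a b)
  gyr_add : ∀ a b x y, gyr a b (add x y) = add (gyr a b x) (gyr a b y)
  gyrassoc : ∀ a b z, add a (add b z) = add (add a b) (gyr a b z)
  loop : ∀ a b, gyr (add a b) b = gyr a b

/-- A topological gyrogroup: the operation is jointly continuous and inversion is continuous. -/
class TopologicalGyrogroup (G : Type u) [TopologicalSpace G] [Gyrogroup G] : Prop where
  continuous_add : Continuous fun p : G × G => Gyrogroup.add p.1 p.2
  continuous_neg : Continuous (Gyrogroup.neg : G → G)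

/-- `H` is a subgyrogroup of `G` (by the subgyrogroup criterion: nonempty and closed
under the operation and inversion; this is equivalent to `(H, ⊕|H)` being itself a
gyrogroup whose gyroautomorphisms are the restrictions of those of `G`). -/
structure IsSubgyrogroup {G : Type u} [Gyrogroup G] (H : Set G) : Prop where
  nonempty : H.Nonempty
  add_mem : ∀ ⦃a⦄, a ∈ H → ∀ ⦃b⦄, b ∈ H → Gyrogroup.add a b ∈ H
  neg_mem : ∀ ⦃a⦄, a ∈ H → Gyrogroup.neg a ∈ H

/-- An `L`-subgyrogroup: a subgyrogroup with `gyr[a,h](H) = H` for all `a ∈ G`, `h ∈ H`. -/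
structure IsLSubgyrogroup {G : Type u} [Gyrogroup G] (H : Set G)
    extends IsSubgyrogroup H : Prop where
  gyr_image : ∀ (a : G), ∀ ⦃h⦄, h ∈ H → Gyrogroup.gyr a h '' H = H

/-- A strongly `L`-subgyrogroup: a subgyrogroup with `gyr[a,b](H) ⊆ H` for all `a, b ∈ G`. -/
structure IsStronglyLSubgyrogroup {G : Type u} [Gyrogroup G] (H : Set G)
    extends IsSubgyrogroup H : Prop where
  gyr_image_subset : ∀ a b : G, Gyrogroup.gyr a b '' H ⊆ H

/-- The pointwise sum `A ⊕ B = {a ⊕ b : a ∈ A, b ∈ B}` of two subsets. -/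
def setAdd {G : Type u} [Gyrogroup G] (A B : Set G) : Set G :=
  Set.image2 Gyrogroup.add A B

/-- The left coset `a ⊕ H = {a ⊕ h : h ∈ H}`. -/
def lCoset {G : Type u} [Gyrogroup G] (H : Set G) (a : G) : Set G :=
  (fun h => Gyrogroup.add a h) '' H

/-- The setoid on `G` identifying points with the same left coset modulo `H`. -/
def cosetSetoid {G : Type u} [Gyrogroup G] (H : Set G) : Setoid G :=
  ⟨fun x y => lCoset H x = lCoset H y,
   ⟨fun _ => rfl, fun h => h.symm, fun h₁ h₂ => h₁.trans h₂⟩⟩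

/-- The coset space `G/H`, carrying the quotient topology: a set `O ⊆ G/H` is open
iff `π⁻¹(O)` is open in `G`. -/
abbrev GyroQuot {G : Type u} [Gyrogroup G] (H : Set G) : Type u :=
  Quotient (cosetSetoid H)

/-- The natural quotient map `π : G → G/H`, `a ↦ a ⊕ H`. -/
def qmap {G : Type u} [Gyrogroup G] (H : Set G) (a : G) : GyroQuot H :=
  Quotient.mk (cosetSetoid H) a

/-- A space has countable tightness if whenever `x ∈ cl P` there is a countable
`Q ⊆ P` with `x ∈ cl Q`. -/
def HasCountableTightness (X : Type*) [TopologicalSpace X] : Prop :=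
  ∀ (x : X) (P : Set X), x ∈ closure P → ∃ Q ⊆ P, Q.Countable ∧ x ∈ closure Q

/-!
Call `S ⊆ G` ω-closed if it contains the closure of each of its countable subsets; a space has
countable tightness as soon as its ω-closed sets are closed. After a left translation it suffices
to show `0 ∈ S` for an ω-closed `S` with `0 ∈ cl S`. Pick a compact `K ⊆ H` and an open `W₁ ∋ 0`
such that `⊖z ⊕ o ∈ H` forces `⊖z ⊕ o ∈ K` for `z, o ∈ W₁`, and an open `W ∋ 0` with
`cl W ⊆ W₁`. Then `H ∩ cl W ⊆ K`, and since `H` is metrizable, `H ∩ cl W ∩ S` is compact. If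
`0 ∉ S`, a neighbourhood `D` of `0` has closure disjoint from it, so `S₁ = S ∩ cl W ∩ cl D` misses
`H` and `π 0 ∉ π S₁`. Countable tightness of `G/H` and closedness of `Z ⊕ K` for closed `Z` show
that `π c ∈ cl (π S₁)` forces `π c ∈ π S₁` for `c ∈ W₁`. Hence `W ∩ D ∖ π⁻¹ (cl (π S₁))` is a
neighbourhood of `0`; it meets `S`, and any such point lies in `S₁`, a contradiction.
-/

open Set Topology

section OmegaClosed

variable {X Y : Type*} [TopologicalSpace X] [TopologicalSpace Y]

def IsOmegaClosed (S : Set X) : Prop :=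
  ∀ Q ⊆ S, Q.Countable → closure Q ⊆ S

theorem IsOmegaClosed.inter_isClosed {S C : Set X} (hS : IsOmegaClosed S) (hC : IsClosed C) :
    IsOmegaClosed (S ∩ C) := fun Q hQ hQc =>
  subset_inter (hS Q (hQ.trans inter_subset_left) hQc)
    (closure_minimal (hQ.trans inter_subset_right) hC)

theorem IsOmegaClosed.image_homeomorph {S : Set X} (hS : IsOmegaClosed S) (e : X ≃ₜ Y) :
    IsOmegaClosed (e '' S) := by
  intro Q hQ hQc
  rw [← image_preimage_eq_of_subset (hQ.trans (image_subset_range e S)), ← e.image_closure]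
  exact image_mono (hS _ ((preimage_mono hQ).trans (e.injective.preimage_image S).subset)
    (hQc.preimage e.injective))

theorem IsOmegaClosed.inter_closure_subset {S T : Set X} [FrechetUrysohnSpace T]
    (hS : IsOmegaClosed S) : T ∩ closure (S ∩ T) ⊆ S := by
  rintro z ⟨hzT, hz⟩
  have hz' : (⟨z, hzT⟩ : T) ∈ closure (Subtype.val ⁻¹' S) := by
    rwa [closure_subtype, Subtype.image_preimage_coe, inter_comm]
  obtain ⟨u, huS, hu⟩ := mem_closure_iff_seq_limit.1 hz'
  refine hS (range fun n => (u n : X)) (range_subset_iff.2 huS) (countable_range _) ?_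
  exact mem_closure_of_tendsto ((continuous_subtype_val.tendsto _).comp hu)
    (Filter.Eventually.of_forall mem_range_self)

theorem IsOmegaClosed.isCompact_inter {S T C K : Set X} [FrechetUrysohnSpace T]
    (hS : IsOmegaClosed S) (hC : IsClosed C) (hK : IsCompact K) (hKT : K ⊆ T)
    (hTC : T ∩ C ⊆ K) : IsCompact (T ∩ C ∩ S) := by
  have h : T ∩ C ∩ S = K ∩ C ∩ closure (S ∩ T) := by
    ext z
    constructor
    · rintro ⟨hz, hzS⟩
      exact ⟨⟨hTC hz, hz.2⟩, subset_closure ⟨hzS, hz.1⟩⟩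
    · rintro ⟨⟨hzK, hzC⟩, hzS⟩
      exact ⟨⟨hKT hzK, hzC⟩, hS.inter_closure_subset ⟨hKT hzK, hzS⟩⟩
  rw [h]
  exact (hK.inter_right hC).inter_right isClosed_closure

theorem isOmegaClosed_setOf_mem_closure_countable (P : Set X) :
    IsOmegaClosed {x | ∃ Q ⊆ P, Q.Countable ∧ x ∈ closure Q} := by
  intro Q hQ hQc x hx
  have hQ' : ∀ q ∈ Q, ∃ R ⊆ P, R.Countable ∧ q ∈ closure R := hQ
  choose! R hRP hRc hR using hQ'
  refine ⟨⋃ q ∈ Q, R q, iUnion₂_subset hRP, hQc.biUnion hRc, ?_⟩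
  refine closure_minimal (fun q hq => ?_) isClosed_closure hx
  exact closure_mono (subset_biUnion_of_mem hq) (hR q hq)

theorem hasCountableTightness_of_forall_isOmegaClosed
    (h : ∀ S : Set X, IsOmegaClosed S → IsClosed S) : HasCountableTightness X := by
  intro x P hx
  have hP : P ⊆ {x | ∃ Q ⊆ P, Q.Countable ∧ x ∈ closure Q} := fun p hp =>
    ⟨{p}, singleton_subset_iff.2 hp, countable_singleton p, subset_closure rfl⟩
  exact closure_minimal hP (h _ (isOmegaClosed_setOf_mem_closure_countable P)) hx

end OmegaClosed

theorem exists_isCompact_isOpen_inter_subset {X : Type*} [TopologicalSpace X] {Y : Set X}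
    [LocallyCompactSpace Y] {x : X} (hx : x ∈ Y) :
    ∃ K U : Set X, IsCompact K ∧ K ⊆ Y ∧ IsOpen U ∧ x ∈ U ∧ U ∩ Y ⊆ K := by
  obtain ⟨s, hs, hsx⟩ := exists_compact_mem_nhds (⟨x, hx⟩ : Y)
  obtain ⟨t, ht, hts⟩ := (mem_nhds_subtype Y _ s).1 hsx
  obtain ⟨U, hUt, hU, hxU⟩ := mem_nhds_iff.1 ht
  refine ⟨Subtype.val '' s, U, hs.image continuous_subtype_val, ?_, hU, hxU, ?_⟩
  · rintro _ ⟨y, -, rfl⟩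
    exact y.2
  · rintro y ⟨hyU, hyY⟩
    exact ⟨⟨y, hyY⟩, hts (hUt hyU), rfl⟩

theorem IsSubgyrogroup.zero_mem {G : Type u} [Gyrogroup G] {H : Set G} (hH : IsSubgyrogroup H) :
    Gyrogroup.zero ∈ H := by
  obtain ⟨a, ha⟩ := hH.nonempty
  simpa only [Gyrogroup.add_neg] using hH.add_mem ha (hH.neg_mem ha)

namespace Gyrogroup

variable {G : Type u} [Gyrogroup G]

local infixl:65 " ⊕ᵍ " => Gyrogroup.add
local prefix:100 "⊖" => Gyrogroup.neg
local notation "𝟬" => Gyrogroup.zero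

theorem neg_add_add_eq_gyr (a x : G) : ⊖a ⊕ᵍ (a ⊕ᵍ x) = gyr (⊖a) a x := by
  rw [gyrassoc, neg_add, zero_add]

theorem add_left_cancel {a x y : G} (h : a ⊕ᵍ x = a ⊕ᵍ y) : x = y :=
  (gyr_bijective (⊖a) a).1 (by rw [← neg_add_add_eq_gyr, ← neg_add_add_eq_gyr, h])

theorem gyr_zero_left (b z : G) : gyr 𝟬 b z = z := by
  have h := gyrassoc 𝟬 b z
  rw [zero_add, zero_add] at h
  exact (add_left_cancel h).symm

theorem gyr_neg_self (a z : G) : gyr (⊖a) a z = z := by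
  rw [← loop, neg_add, gyr_zero_left]

theorem gyr_self_neg (a z : G) : gyr a (⊖a) z = z := by
  rw [← loop, add_neg, gyr_zero_left]

theorem neg_add_cancel_left (a x : G) : ⊖a ⊕ᵍ (a ⊕ᵍ x) = x := by
  rw [neg_add_add_eq_gyr, gyr_neg_self]

theorem add_neg_cancel_left (a x : G) : a ⊕ᵍ (⊖a ⊕ᵍ x) = x := by
  rw [gyrassoc, add_neg, zero_add, gyr_self_neg]

theorem eq_neg_of_add_eq_zero {a b : G} (h : a ⊕ᵍ b = 𝟬) : b = ⊖a := by
  simpa only [h, add_zero] using (neg_add_cancel_left a b).symm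

theorem neg_zero : (⊖𝟬 : G) = 𝟬 :=
  (eq_neg_of_add_eq_zero (zero_add (𝟬 : G))).symm

theorem neg_neg (a : G) : ⊖⊖a = a :=
  (eq_neg_of_add_eq_zero (neg_add a)).symm

theorem gyr_eq (a b z : G) : gyr a b z = ⊖(a ⊕ᵍ b) ⊕ᵍ (a ⊕ᵍ (b ⊕ᵍ z)) := by
  rw [gyrassoc a b z, neg_add_cancel_left]

theorem gyr_neg_add_neg (a b : G) : gyr a b (⊖b ⊕ᵍ ⊖a) = ⊖(a ⊕ᵍ b) := by
  apply eq_neg_of_add_eq_zero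
  rw [← gyrassoc, add_neg_cancel_left, add_neg]

theorem gyr_gyr_neg_neg (a b z : G) : gyr a b (gyr (⊖b) (⊖a) z) = z := by
  have h : a ⊕ᵍ (b ⊕ᵍ (⊖b ⊕ᵍ (⊖a ⊕ᵍ z))) = z := by rw [add_neg_cancel_left, add_neg_cancel_left]
  rwa [gyrassoc (⊖b) (⊖a), gyrassoc a b, gyr_add, gyr_neg_add_neg, add_neg_cancel_left] at h

theorem exists_add_eq (b c : G) : ∃ x, x ⊕ᵍ b = c := by
  -- the loop property `gyr[y ⊕ a, a] = gyr[y, a]`, expanded by `gyr_eq`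
  have key : ∀ y a w : G, ((y ⊕ᵍ a) ⊕ᵍ a) ⊕ᵍ w = (y ⊕ᵍ a) ⊕ᵍ (⊖y ⊕ᵍ ((y ⊕ᵍ a) ⊕ᵍ w)) := by
    intro y a w
    have h := congrFun (loop y a) (⊖a ⊕ᵍ (⊖y ⊕ᵍ ((y ⊕ᵍ a) ⊕ᵍ w)))
    rw [gyr_eq, gyr_eq, add_neg_cancel_left, add_neg_cancel_left, neg_add_cancel_left] at h
    have h' := congrArg (((y ⊕ᵍ a) ⊕ᵍ a) ⊕ᵍ ·) h
    rwa [add_neg_cancel_left, eq_comm] at h'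
  refine ⟨⊖b ⊕ᵍ ((b ⊕ᵍ c) ⊕ᵍ ⊖b), ?_⟩
  have h := key (⊖(b ⊕ᵍ c)) ((b ⊕ᵍ c) ⊕ᵍ ⊖b) b
  rw [neg_add_cancel_left (b ⊕ᵍ c) (⊖b), neg_neg, neg_add, add_zero] at h
  rw [h, neg_add_cancel_left]

/-- Ungar's cosubtraction `c ⊟ b = c ⊕ gyr[c, b] (⊖b)`, with `gyr` expanded by `gyr_eq`. -/
def cosub (c b : G) : G := c ⊕ᵍ (⊖(c ⊕ᵍ b) ⊕ᵍ c)

theorem add_cosub_cancel_right (x b : G) : cosub (x ⊕ᵍ b) b = x := by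
  have h : ⊖((x ⊕ᵍ b) ⊕ᵍ b) ⊕ᵍ (x ⊕ᵍ b) = gyr (x ⊕ᵍ b) b (⊖b) := by
    rw [gyr_eq, add_neg, add_zero]
  rw [cosub, h, loop, ← gyrassoc, add_neg, add_zero]

theorem cosub_add_cancel (c b : G) : cosub c b ⊕ᵍ b = c := by
  obtain ⟨x, rfl⟩ := exists_add_eq b c
  rw [add_cosub_cancel_right]

section Topology

variable [TopologicalSpace G] [TopologicalGyrogroup G]

theorem _root_.Continuous.gyroAdd {X : Type*} [TopologicalSpace X] {f g : X → G}
    (hf : Continuous f) (hg : Continuous g) : Continuous fun x => f x ⊕ᵍ g x :=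
  TopologicalGyrogroup.continuous_add.comp (hf.prodMk hg)

theorem _root_.Continuous.gyroNeg {X : Type*} [TopologicalSpace X] {f : X → G}
    (hf : Continuous f) : Continuous fun x => ⊖f x :=
  TopologicalGyrogroup.continuous_neg.comp hf

theorem continuous_cosub : Continuous fun p : G × G => cosub p.1 p.2 :=
  continuous_fst.gyroAdd ((continuous_fst.gyroAdd continuous_snd).gyroNeg.gyroAdd continuous_fst)

def homeomorphAddLeft (a : G) : G ≃ₜ G where
  toFun := (a ⊕ᵍ ·)
  invFun := (⊖a ⊕ᵍ ·)
  left_inv := neg_add_cancel_left a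
  right_inv := add_neg_cancel_left a
  continuous_toFun := continuous_const.gyroAdd continuous_id
  continuous_invFun := continuous_const.gyroAdd continuous_id

def homeomorphAddRight (b : G) : G ≃ₜ G where
  toFun := (· ⊕ᵍ b)
  invFun := (cosub · b)
  left_inv x := add_cosub_cancel_right x b
  right_inv c := cosub_add_cancel c b
  continuous_toFun := continuous_id.gyroAdd continuous_const
  continuous_invFun := continuous_cosub.comp (continuous_id.prodMk continuous_const)

theorem exists_isOpen_closure_subset {U : Set G} (hU : IsOpen U) (h0 : 𝟬 ∈ U) :
    ∃ V : Set G, IsOpen V ∧ 𝟬 ∈ V ∧ closure V ⊆ U := by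
  have h00 : ((𝟬 : G), (𝟬 : G)) ∈ (fun p : G × G => cosub p.1 p.2) ⁻¹' U := by
    simpa only [mem_preimage, cosub, zero_add, neg_zero] using h0
  obtain ⟨V₁, V₂, hV₁, hV₂, h0V₁, h0V₂, hV⟩ :=
    isOpen_prod_iff.1 (hU.preimage continuous_cosub) 𝟬 𝟬 h00
  refine ⟨V₁ ∩ V₂, hV₁.inter hV₂, ⟨h0V₁, h0V₂⟩, fun x hx => ?_⟩
  -- some `x ⊕ w` with `w ∈ V₁ ∩ V₂` lies in `V₁`, and `x = cosub (x ⊕ w) w`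
  obtain ⟨_, ⟨w, hw, rfl⟩, hxw⟩ := mem_closure_iff.1 hx _
    ((homeomorphAddLeft x).isOpenMap _ (hV₁.inter hV₂)) ⟨𝟬, ⟨h0V₁, h0V₂⟩, add_zero x⟩
  simpa only [mem_preimage, homeomorphAddLeft, Homeomorph.homeomorph_mk_coe, Equiv.coe_fn_mk,
    add_cosub_cancel_right] using hV (mk_mem_prod hxw.1 hw.2)

theorem isClosed_setAdd {Z K : Set G} (hZ : IsClosed Z) (hK : IsCompact K) :
    IsClosed (setAdd Z K) := by
  have : CompactSpace K := isCompact_iff_compactSpace.1 hK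
  have hZK : setAdd Z K = Prod.snd '' {p : K × G | cosub p.2 p.1 ∈ Z} := by
    ext x
    constructor
    · rintro ⟨z, hz, k, hk, rfl⟩
      refine ⟨(⟨k, hk⟩, z ⊕ᵍ k), ?_, rfl⟩
      simpa only [mem_ofPred_eq, add_cosub_cancel_right] using hz
    · rintro ⟨⟨⟨k, hk⟩, y⟩, hy, rfl⟩
      exact ⟨cosub y k, hy, k, hk, cosub_add_cancel y k⟩
  rw [hZK]
  exact isClosedMap_snd_of_compactSpace _ (hZ.preimage (continuous_cosub.comp
    (continuous_snd.prodMk (continuous_subtype_val.comp continuous_fst))))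

end Topology

section Quotient

variable {H : Set G}

theorem lCoset_add_of_mem (hH : IsStronglyLSubgyrogroup H) (x : G) {h : G} (hh : h ∈ H) :
    lCoset H (x ⊕ᵍ h) = lCoset H x := by
  have hgyr : ∀ a b {k}, k ∈ H → gyr a b k ∈ H := fun a b k hk =>
    hH.gyr_image_subset a b (mem_image_of_mem _ hk)
  ext z
  simp only [lCoset, mem_image]
  constructor
  · rintro ⟨k, hk, rfl⟩
    exact ⟨h ⊕ᵍ gyr (⊖h) (⊖x) k, hH.add_mem hh (hgyr _ _ hk), by rw [gyrassoc, gyr_gyr_neg_neg]⟩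
  · rintro ⟨k, hk, rfl⟩
    refine ⟨gyr x h (⊖h ⊕ᵍ k), hgyr _ _ (hH.add_mem (hH.neg_mem hh) hk), ?_⟩
    rw [← gyrassoc, add_neg_cancel_left]

theorem qmap_eq_qmap_iff (hH : IsStronglyLSubgyrogroup H) {x y : G} :
    qmap H x = qmap H y ↔ ⊖x ⊕ᵍ y ∈ H := by
  rw [qmap, qmap, Quotient.eq]
  change lCoset H x = lCoset H y ↔ _
  constructor
  · intro hxy
    obtain ⟨k, hk, hky⟩ : y ∈ lCoset H x := hxy ▸ ⟨𝟬, hH.zero_mem, add_zero y⟩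
    rwa [← hky, neg_add_cancel_left]
  · intro hxy
    rw [← add_neg_cancel_left x y, lCoset_add_of_mem hH x hxy]

variable [TopologicalSpace G] [TopologicalGyrogroup G]

theorem isOpenMap_qmap (hH : IsStronglyLSubgyrogroup H) : IsOpenMap (qmap H) := by
  intro O hO
  change IsOpen (qmap H ⁻¹' (qmap H '' O))
  have hpre : qmap H ⁻¹' (qmap H '' O) = ⋃ h ∈ H, homeomorphAddRight h '' O := by
    ext x
    simp only [mem_preimage, mem_image, mem_iUnion, homeomorphAddRight,
      Homeomorph.homeomorph_mk_coe, Equiv.coe_fn_mk]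
    constructor
    · rintro ⟨o, ho, hox⟩
      exact ⟨⊖o ⊕ᵍ x, (qmap_eq_qmap_iff hH).1 hox, o, ho, add_neg_cancel_left o x⟩
    · rintro ⟨h, hh, o, ho, rfl⟩
      exact ⟨o, ho, (qmap_eq_qmap_iff hH).2 (by rwa [neg_add_cancel_left])⟩
  rw [hpre]
  exact isOpen_biUnion fun h _ => (homeomorphAddRight h).isOpenMap O hO

theorem exists_isOpen_neg_add_mem_isCompact (hH : IsSubgyrogroup H) [LocallyCompactSpace H] :
    ∃ K W : Set G, IsCompact K ∧ K ⊆ H ∧ IsOpen W ∧ 𝟬 ∈ W ∧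
      ∀ z ∈ W, ∀ o ∈ W, ⊖z ⊕ᵍ o ∈ H → ⊖z ⊕ᵍ o ∈ K := by
  obtain ⟨K, U, hK, hKH, hU, h0U, hUK⟩ := exists_isCompact_isOpen_inter_subset hH.zero_mem
  have h00 : ((𝟬 : G), (𝟬 : G)) ∈ (fun p : G × G => ⊖p.1 ⊕ᵍ p.2) ⁻¹' U := by
    simpa only [mem_preimage, neg_zero, zero_add] using h0U
  obtain ⟨W₁, W₂, hW₁, hW₂, h0W₁, h0W₂, hW⟩ := isOpen_prod_iff.1
    (hU.preimage (continuous_fst.gyroNeg.gyroAdd continuous_snd)) 𝟬 𝟬 h00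
  exact ⟨K, W₁ ∩ W₂, hK, hKH, hW₁.inter hW₂, ⟨h0W₁, h0W₂⟩,
    fun z hz o ho hzo => hUK ⟨hW (mk_mem_prod hz.1 ho.2), hzo⟩⟩

theorem mem_image_qmap_of_mem_closure (hH : IsStronglyLSubgyrogroup H)
    (hct : HasCountableTightness (GyroQuot H)) {K W S : Set G} (hK : IsCompact K) (hKH : K ⊆ H)
    (hW : IsOpen W) (hWK : ∀ z ∈ W, ∀ o ∈ W, ⊖z ⊕ᵍ o ∈ H → ⊖z ⊕ᵍ o ∈ K)
    (hS : IsOmegaClosed S) (hSW : S ⊆ W) {c : G} (hc : c ∈ W)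
    (hcS : qmap H c ∈ closure (qmap H '' S)) : qmap H c ∈ qmap H '' S := by
  obtain ⟨Q', hQ'S, hQ'c, hcQ'⟩ := hct _ _ hcS
  obtain ⟨Q, hQS, hQ⟩ := SurjOn.exists_bijOn_subset hQ'S
  rw [← hQ.image_eq] at hcQ'
  have hZS : closure Q ⊆ S := hS Q hQS (hQ.mapsTo.countable_of_injOn hQ.injOn hQ'c)
  by_contra hcS'
  have hcZK : c ∉ setAdd (closure Q) K := by
    rintro ⟨z, hz, k, hk, rfl⟩
    exact hcS' ⟨z, hZS hz, (qmap_eq_qmap_iff hH).2 (by rw [neg_add_cancel_left]; exact hKH hk)⟩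
  obtain ⟨_, ⟨o, ⟨hoW, hoZK⟩, rfl⟩, q, hqQ, hqo⟩ := mem_closure_iff.1 hcQ' _
    (isOpenMap_qmap hH _ (hW.sdiff (isClosed_setAdd isClosed_closure hK))) ⟨c, ⟨hc, hcZK⟩, rfl⟩
  have hqoK : ⊖q ⊕ᵍ o ∈ K := hWK q (hSW (hQS hqQ)) o hoW ((qmap_eq_qmap_iff hH).1 hqo)
  exact hoZK ⟨q, subset_closure hqQ, _, hqoK, add_neg_cancel_left q o⟩

theorem zero_mem_of_isOmegaClosed [T2Space G] (hH : IsStronglyLSubgyrogroup H)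
    [LocallyCompactSpace H] [FrechetUrysohnSpace H] (hct : HasCountableTightness (GyroQuot H))
    {S : Set G} (hS : IsOmegaClosed S) (h0 : 𝟬 ∈ closure S) : 𝟬 ∈ S := by
  by_contra h0S
  obtain ⟨K, W₁, hK, hKH, hW₁, h0W₁, hW₁K⟩ :=
    exists_isOpen_neg_add_mem_isCompact hH.toIsSubgyrogroup
  obtain ⟨W, hW, h0W, hWW₁⟩ := exists_isOpen_closure_subset hW₁ h0W₁
  have hHK : H ∩ closure W ⊆ K := fun z hz => by
    simpa only [neg_zero, zero_add] using
      hW₁K 𝟬 h0W₁ z (hWW₁ hz.2) (by simpa only [neg_zero, zero_add] using hz.1)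
  have hC₀ : IsCompact (H ∩ closure W ∩ S) :=
    hS.isCompact_inter isClosed_closure hK hKH hHK
  obtain ⟨D, hD, h0D, hDC₀⟩ :=
    exists_isOpen_closure_subset hC₀.isClosed.isOpen_compl (fun h => h0S h.2)
  set S₁ := S ∩ closure W ∩ closure D
  have h0S₁ : qmap H 𝟬 ∉ qmap H '' S₁ := by
    rintro ⟨s, ⟨⟨hsS, hsW⟩, hsD⟩, hs0⟩
    have hsH : s ∈ H := by
      simpa only [add_zero, neg_neg] using hH.neg_mem ((qmap_eq_qmap_iff hH).1 hs0)
    exact hDC₀ hsD ⟨⟨hsH, hsW⟩, hsS⟩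
  have h0S₁' : qmap H 𝟬 ∉ closure (qmap H '' S₁) := fun h =>
    h0S₁ (mem_image_qmap_of_mem_closure hH hct hK hKH hW₁ hW₁K
      ((hS.inter_isClosed isClosed_closure).inter_isClosed isClosed_closure)
      (fun s hs => hWW₁ hs.1.2) h0W₁ h)
  have hN : IsOpen (W ∩ D ∩ qmap H ⁻¹' (closure (qmap H '' S₁))ᶜ) :=
    (hW.inter hD).inter (isClosed_closure.isOpen_compl.preimage continuous_quot_mk)
  obtain ⟨s, ⟨⟨hsW, hsD⟩, hsS₁⟩, hsS⟩ := mem_closure_iff.1 h0 _ hN ⟨⟨h0W, h0D⟩, h0S₁'⟩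
  exact hsS₁ (subset_closure ⟨s, ⟨⟨hsS, subset_closure hsW⟩, subset_closure hsD⟩, rfl⟩)

theorem isClosed_of_isOmegaClosed [T2Space G] (hH : IsStronglyLSubgyrogroup H)
    [LocallyCompactSpace H] [FrechetUrysohnSpace H] (hct : HasCountableTightness (GyroQuot H))
    {S : Set G} (hS : IsOmegaClosed S) : IsClosed S := by
  refine closure_subset_iff_isClosed.1 fun x hx => ?_
  have h0 : 𝟬 ∈ closure (homeomorphAddLeft (⊖x) '' S) := by
    rw [← Homeomorph.image_closure]
    exact ⟨x, hx, neg_add x⟩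
  obtain ⟨s, hs, hsx⟩ := zero_mem_of_isOmegaClosed hH hct (hS.image_homeomorph _) h0
  rwa [← neg_neg x, ← eq_neg_of_add_eq_zero hsx]

end Quotient

end Gyrogroup

/-- If `H` is a locally compact metrizable strongly L-subgyrogroup of a
Hausdorff topological gyrogroup `G` and `G/H` has countable tightness, then `G` has
countable tightness. -/
theorem stmt_19 {G : Type u} [Gyrogroup G] [TopologicalSpace G] [TopologicalGyrogroup G]
    [T2Space G] (H : Set G) (hH : IsStronglyLSubgyrogroup H)
    (hlc : LocallyCompactSpace H) (hmet : TopologicalSpace.MetrizableSpace H)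
    (hct : HasCountableTightness (GyroQuot H)) :
    HasCountableTightness G :=
  hasCountableTightness_of_forall_isOmegaClosed fun _ hS =>
    Gyrogroup.isClosed_of_isOmegaClosed hH hct hS
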